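/- arXiv:1305.0203 — 4 statements merged into one kernel-verified Lean document; each statement's English description precedes it below -/
import Mathlib

section
/- Let M ∈ ℝ^{m×n} be partitioned in blocks with top-left s×s block A_M, let G ∈ ℝ^{m×s}, S ∈ ℝ^{s×n} satisfy ‖M − GS‖₂ ≤ e_s, let G_A be the top s rows of G and S_A the first s columns of S. Assume: (1) σ_s(GS) > 0; (2) there is γ ≥ 1 with σ_s(G)·σ_s(S) = σ_s(GS)/γ; (3) there is β ≥ 1 with σ_s(G_A) ≥ σ_s(G)/β and σ_s(S_A) ≥ σ_s(S)/β; (4) e_s < (σ_s(M) − e_s)/(β²γ). Then A_M is nonsingular. -/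
open Matrix

/-- Port helper: `Matrix.isHermitian_transpose_mul_self` is no longer in Mathlib. -/
theorem Matrix.isHermitian_transpose_mul_self {m n : Type*} [Fintype m]
    (A : Matrix m n ℝ) : (Aᵀ * A).IsHermitian := by
  simpa [Matrix.conjTranspose_eq_transpose_of_trivial] using
    Matrix.isHermitian_conjTranspose_mul_self A

/-- `sv A k` is the `k`-th largest singular value (1-indexed) of the real matrix `A`,
computed as the `k`-th largest square root of an eigenvalue of `Aᵀ * A`. -/
noncomputable def sv {p q : ℕ} (A : Matrix (Fin p) (Fin q) ℝ) (k : ℕ) : ℝ :=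
  if h : q - k < q then
    (fun i : Fin q => Real.sqrt ((Matrix.isHermitian_transpose_mul_self A).eigenvalues i))
      (Tuple.sort (fun i : Fin q =>
        Real.sqrt ((Matrix.isHermitian_transpose_mul_self A).eigenvalues i)) ⟨q - k, h⟩)
  else 0

/-!
Write `A_M = G_A S_A + E_A`, where `E_A` is the top-left block of `E = M - G S`. Restricting `E`
to a block (zero-padding the input vector and dropping output rows) does not increase `‖E x‖`,
so `‖E_A x‖ ≤ e_s ‖x‖`, while `‖G_A S_A x‖ ≥ σ_s(G_A) σ_s(S_A) ‖x‖`. By (2), (3) and Weyl's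
inequality `σ_s(M) ≤ σ_s(G S) + ‖E‖₂`,
`σ_s(G_A) σ_s(S_A) ≥ σ_s(G S) / (β² γ) ≥ (σ_s(M) - e_s) / (β² γ) > e_s`,
so `A_M` has trivial kernel.

The singular value bounds come from the spectral decomposition of `Aᵀ A`: on the span of the
eigenvectors with eigenvalue `≥ σ_k²` (dimension `k`) we have `‖A x‖ ≥ σ_k ‖x‖`, and on the span
of those with eigenvalue `≤ σ_k²` (dimension `q - k + 1`) we have `‖A x‖ ≤ σ_k ‖x‖`. Two such
subspaces, one for `A` and one for `B`, meet nontrivially, which gives Weyl's inequality.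
-/

open WithLp
open scoped RealInnerProductSpace

lemma sqrt_mul_le_of_mul_sq_le {a b c : ℝ} (ha : 0 ≤ a) (hb : 0 ≤ b) (h : c * a ^ 2 ≤ b ^ 2) :
    √c * a ≤ b := by
  calc √c * a = √(c * a ^ 2) := by rw [Real.sqrt_mul' c (sq_nonneg a), Real.sqrt_sq ha]
    _ ≤ √(b ^ 2) := Real.sqrt_le_sqrt h
    _ = b := Real.sqrt_sq hb

lemma le_sqrt_mul_of_sq_le_mul {a b c : ℝ} (ha : 0 ≤ a) (hb : 0 ≤ b) (h : b ^ 2 ≤ c * a ^ 2) :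
    b ≤ √c * a := by
  calc b = √(b ^ 2) := (Real.sqrt_sq hb).symm
    _ ≤ √(c * a ^ 2) := Real.sqrt_le_sqrt h
    _ = √c * a := by rw [Real.sqrt_mul' c (sq_nonneg a), Real.sqrt_sq ha]

lemma Fintype.sum_apply_extend_zero {ι κ α M : Type*} [Fintype ι] [Fintype κ] [Zero α]
    [AddCommMonoid M] {c : κ → ι} (hc : Function.Injective c) (f : κ → α) (g : ι → α → M)
    (hg : ∀ i, g i 0 = 0) :
    ∑ i, g i (Function.extend c f 0 i) = ∑ k, g (c k) (f k) := by
  classical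
  rw [← Finset.sum_subset (Finset.subset_univ (Finset.univ.map ⟨c, hc⟩)), Finset.sum_map]
  · simp [hc.extend_apply]
  · intro i _ hi
    rw [Function.extend_apply' _ _ _ (by simpa using hi), Pi.zero_apply, hg]

namespace EuclideanSpace

variable {ι κ : Type*} [Fintype ι] [Fintype κ]

lemma norm_toLp_comp_le (y : EuclideanSpace ℝ ι) {r : κ → ι} (hr : Function.Injective r) :
    ‖toLp 2 (ofLp y ∘ r)‖ ≤ ‖y‖ := by
  rw [← sq_le_sq₀ (norm_nonneg _) (norm_nonneg _), real_norm_sq_eq, real_norm_sq_eq]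
  calc ∑ k, y (r k) ^ 2 = ∑ i ∈ Finset.univ.map ⟨r, hr⟩, y i ^ 2 := by
        rw [Finset.sum_map]; rfl
    _ ≤ ∑ i, y i ^ 2 := Finset.sum_le_univ_sum_of_nonneg fun i => sq_nonneg _

lemma norm_toLp_extend_zero (x : EuclideanSpace ℝ κ) {c : κ → ι} (hc : Function.Injective c) :
    ‖toLp 2 (Function.extend c (ofLp x) 0)‖ = ‖x‖ := by
  rw [← sq_eq_sq₀ (norm_nonneg _) (norm_nonneg _), real_norm_sq_eq, real_norm_sq_eq]
  exact Fintype.sum_apply_extend_zero hc _ (fun _ a => a ^ 2) fun _ => zero_pow two_ne_zero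

end EuclideanSpace

section OrthonormalBasis

variable {ι E : Type*} [Fintype ι] [NormedAddCommGroup E] [InnerProductSpace ℝ E]
  (w : OrthonormalBasis ι ℝ E)

lemma OrthonormalBasis.inner_eq_zero_of_mem_span {T : Set ι} {x : E}
    (hx : x ∈ Submodule.span ℝ (w '' T)) {j : ι} (hj : j ∉ T) : ⟪w j, x⟫ = 0 := by
  induction hx using Submodule.span_induction with
  | mem y hy =>
    obtain ⟨i, hi, rfl⟩ := hy
    exact w.orthonormal.2 fun h => hj (h ▸ hi)
  | zero => exact inner_zero_right _
  | add y z _ _ hy hz => rw [inner_add_right, hy, hz, add_zero]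
  | smul a y _ hy => rw [real_inner_smul_right, hy, mul_zero]

lemma OrthonormalBasis.finrank_span_image (T : Finset ι) :
    Module.finrank ℝ (Submodule.span ℝ (w '' T)) = T.card := by
  classical
  have hli := w.orthonormal.linearIndependent
  rw [← Finset.coe_image, finrank_span_finset_eq_card (by
    rw [Finset.coe_image]; exact (hli.linearIndepOn _).id_image),
    Finset.card_image_of_injective _ hli.injective]

lemma OrthonormalBasis.mul_norm_sq_le_sum_mul_inner_sq (μ : ι → ℝ) {T : Set ι} {c : ℝ}
    (hc : ∀ j ∈ T, c ≤ μ j) {x : E} (hx : x ∈ Submodule.span ℝ (w '' T)) :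
    c * ‖x‖ ^ 2 ≤ ∑ j, μ j * ⟪w j, x⟫ ^ 2 := by
  rw [← w.sum_sq_inner_right x, Finset.mul_sum]
  refine Finset.sum_le_sum fun j _ => ?_
  by_cases hj : j ∈ T
  · exact mul_le_mul_of_nonneg_right (hc j hj) (sq_nonneg _)
  · simp [w.inner_eq_zero_of_mem_span hx hj]

lemma OrthonormalBasis.sum_mul_inner_sq_le_mul_norm_sq (μ : ι → ℝ) {T : Set ι} {c : ℝ}
    (hc : ∀ j ∈ T, μ j ≤ c) {x : E} (hx : x ∈ Submodule.span ℝ (w '' T)) :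
    ∑ j, μ j * ⟪w j, x⟫ ^ 2 ≤ c * ‖x‖ ^ 2 := by
  have := w.mul_norm_sq_le_sum_mul_inner_sq (-μ) (c := -c) (fun j hj => neg_le_neg (hc j hj)) hx
  simpa only [Pi.neg_apply, neg_mul, Finset.sum_neg_distrib, neg_le_neg_iff] using this

end OrthonormalBasis

lemma Matrix.IsHermitian.inner_toEuclideanLin_self {n : Type*} [Fintype n] [DecidableEq n]
    {H : Matrix n n ℝ} (hH : H.IsHermitian) (x : EuclideanSpace ℝ n) :
    ⟪x, toEuclideanLin H x⟫ = ∑ j, hH.eigenvalues j * ⟪hH.eigenvectorBasis j, x⟫ ^ 2 := by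
  rw [← hH.eigenvectorBasis.sum_inner_mul_inner x (toEuclideanLin H x)]
  refine Finset.sum_congr rfl fun j _ => ?_
  have hsymm := isSymmetric_toEuclideanLin_iff.mpr hH
  have heig : toEuclideanLin H (hH.eigenvectorBasis j) =
      hH.eigenvalues j • hH.eigenvectorBasis j := by
    rw [toLpLin_apply, hH.mulVec_eigenvectorBasis]; rfl
  rw [← hsymm, heig, real_inner_smul_left, real_inner_comm]
  ring

lemma Matrix.norm_toEuclideanLin_sq {m n : Type*} [Fintype m] [DecidableEq m] [Fintype n]
    [DecidableEq n] (A : Matrix m n ℝ) (x : EuclideanSpace ℝ n) :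
    ‖toEuclideanLin A x‖ ^ 2 = ⟪x, toEuclideanLin (Aᵀ * A) x⟫ := by
  rw [toLpLin_mul (q := 2), LinearMap.comp_apply, ← conjTranspose_eq_transpose_of_trivial,
    toEuclideanLin_conjTranspose_eq_adjoint, LinearMap.adjoint_inner_right,
    real_inner_self_eq_norm_sq]

lemma Matrix.isUnit_det_add_of_norm_le {n : Type*} [Fintype n] [DecidableEq n]
    {A E : Matrix n n ℝ} {c e : ℝ} (hA : ∀ x, c * ‖x‖ ≤ ‖toEuclideanLin A x‖)
    (hE : ∀ x, ‖toEuclideanLin E x‖ ≤ e * ‖x‖) (hec : e < c) : IsUnit (A + E).det := by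
  rw [isUnit_iff_ne_zero]
  intro hdet
  obtain ⟨v, hv0, hv⟩ := exists_mulVec_eq_zero_iff.mpr hdet
  set x : EuclideanSpace ℝ n := toLp 2 v
  have hx : 0 < ‖x‖ := norm_pos_iff.mpr (by simpa [x] using hv0)
  have hAx : toEuclideanLin A x = -toEuclideanLin E x := by
    rw [eq_neg_iff_add_eq_zero, ← LinearMap.add_apply, ← map_add, toLpLin_apply]
    simp [x, hv]
  have hce : c * ‖x‖ ≤ e * ‖x‖ :=
    calc c * ‖x‖ ≤ ‖toEuclideanLin A x‖ := hA x
      _ = ‖toEuclideanLin E x‖ := by rw [hAx, norm_neg]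
      _ ≤ e * ‖x‖ := hE x
  exact hec.not_ge (le_of_mul_le_mul_right hce hx)

section SingularValues

variable {p q : ℕ}

lemma sv_nonneg (A : Matrix (Fin p) (Fin q) ℝ) (k : ℕ) : 0 ≤ sv A k := by
  unfold sv
  split_ifs <;> positivity

-- `μ` lists the eigenvalues of `Aᵀ * A` in increasing order and `w` the matching eigenvectors.
lemma exists_orthonormalBasis_sv (A : Matrix (Fin p) (Fin q) ℝ) :
    ∃ (w : OrthonormalBasis (Fin q) ℝ (EuclideanSpace ℝ (Fin q))) (μ : Fin q → ℝ),
      Monotone μ ∧ (∀ k (h : q - k < q), sv A k = √(μ ⟨q - k, h⟩)) ∧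
      ∀ x, ‖toEuclideanLin A x‖ ^ 2 = ∑ j, μ j * ⟪w j, x⟫ ^ 2 := by
  set hH := isHermitian_transpose_mul_self A
  have hnonneg : ∀ i, 0 ≤ hH.eigenvalues i := eigenvalues_conjTranspose_mul_self_nonneg A
  set σ := Tuple.sort fun i => √(hH.eigenvalues i)
  refine ⟨hH.eigenvectorBasis.reindex σ.symm, hH.eigenvalues ∘ σ, fun i j hij => ?_,
    fun k h => by simp only [sv, dif_pos h]; rfl, fun x => ?_⟩
  · exact (Real.sqrt_le_sqrt_iff (hnonneg _)).mp
      (Tuple.monotone_sort (fun i => √(hH.eigenvalues i)) hij)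
  · rw [norm_toEuclideanLin_sq, hH.inner_toEuclideanLin_self, ← Equiv.sum_comp σ]
    simp

lemma exists_finrank_eq_sv_mul_norm_le (A : Matrix (Fin p) (Fin q) ℝ) {k : ℕ} (hk : 1 ≤ k)
    (hkq : k ≤ q) :
    ∃ V : Submodule ℝ (EuclideanSpace ℝ (Fin q)), Module.finrank ℝ V = k ∧
      ∀ x ∈ V, sv A k * ‖x‖ ≤ ‖toEuclideanLin A x‖ := by
  obtain ⟨w, μ, hmono, hsv, hnorm⟩ := exists_orthonormalBasis_sv A
  have ht : q - k < q := by omega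
  refine ⟨Submodule.span ℝ (w '' ↑(Finset.Ici (⟨q - k, ht⟩ : Fin q))), ?_, fun x hx => ?_⟩
  · rw [w.finrank_span_image, Fin.card_Ici]
    dsimp only
    omega
  · rw [hsv k ht]
    refine sqrt_mul_le_of_mul_sq_le (norm_nonneg _) (norm_nonneg _) ?_
    rw [hnorm]
    exact w.mul_norm_sq_le_sum_mul_inner_sq μ (fun j hj => hmono (Finset.mem_Ici.mp hj)) hx

lemma exists_finrank_eq_norm_le_sv_mul (A : Matrix (Fin p) (Fin q) ℝ) {k : ℕ} (hk : 1 ≤ k)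
    (hkq : k ≤ q) :
    ∃ W : Submodule ℝ (EuclideanSpace ℝ (Fin q)), Module.finrank ℝ W = q - k + 1 ∧
      ∀ x ∈ W, ‖toEuclideanLin A x‖ ≤ sv A k * ‖x‖ := by
  obtain ⟨w, μ, hmono, hsv, hnorm⟩ := exists_orthonormalBasis_sv A
  have ht : q - k < q := by omega
  refine ⟨Submodule.span ℝ (w '' ↑(Finset.Iic (⟨q - k, ht⟩ : Fin q))), ?_, fun x hx => ?_⟩
  · rw [w.finrank_span_image, Fin.card_Iic]
  · rw [hsv k ht]
    refine le_sqrt_mul_of_sq_le_mul (norm_nonneg _) (norm_nonneg _) ?_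
    rw [hnorm]
    exact w.sum_mul_inner_sq_le_mul_norm_sq μ (fun j hj => hmono (Finset.mem_Iic.mp hj)) hx

lemma sv_mul_norm_le_norm_toEuclideanLin (A : Matrix (Fin p) (Fin q) ℝ)
    (x : EuclideanSpace ℝ (Fin q)) : sv A q * ‖x‖ ≤ ‖toEuclideanLin A x‖ := by
  rcases Nat.eq_zero_or_pos q with rfl | hq
  · simp [Subsingleton.elim x 0]
  obtain ⟨V, hV, hAV⟩ := exists_finrank_eq_sv_mul_norm_le A hq le_rfl
  rw [Submodule.eq_top_of_finrank_eq (hV.trans finrank_euclideanSpace_fin.symm)] at hAV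
  exact hAV x trivial

lemma norm_toEuclideanLin_le_sv_one_mul (A : Matrix (Fin p) (Fin q) ℝ)
    (x : EuclideanSpace ℝ (Fin q)) : ‖toEuclideanLin A x‖ ≤ sv A 1 * ‖x‖ := by
  rcases Nat.eq_zero_or_pos q with rfl | hq
  · simp [Subsingleton.elim x 0]
  obtain ⟨W, hW, hAW⟩ := exists_finrank_eq_norm_le_sv_mul A le_rfl hq
  rw [Submodule.eq_top_of_finrank_eq (S := W)
    (by rw [hW, finrank_euclideanSpace_fin]; omega)] at hAW
  exact hAW x trivial

theorem sv_le_sv_add_sv_one_sub (A B : Matrix (Fin p) (Fin q) ℝ) {k : ℕ} (hk : 1 ≤ k)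
    (hkq : k ≤ q) : sv A k ≤ sv B k + sv (A - B) 1 := by
  obtain ⟨V, hV, hAV⟩ := exists_finrank_eq_sv_mul_norm_le A hk hkq
  obtain ⟨W, hW, hBW⟩ := exists_finrank_eq_norm_le_sv_mul B hk hkq
  obtain ⟨x, hxV, hxW, hx0⟩ : ∃ x ∈ V, x ∈ W ∧ x ≠ 0 := by
    by_contra! h
    have := Submodule.finrank_add_finrank_le_of_disjoint (Submodule.disjoint_def.mpr h)
    rw [hV, hW, finrank_euclideanSpace_fin] at this
    omega
  have hsplit : toEuclideanLin A x = toEuclideanLin B x + toEuclideanLin (A - B) x := by simp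
  refine le_of_mul_le_mul_right ?_ (norm_pos_iff.mpr hx0)
  calc sv A k * ‖x‖ ≤ ‖toEuclideanLin A x‖ := hAV x hxV
    _ ≤ ‖toEuclideanLin B x‖ + ‖toEuclideanLin (A - B) x‖ := hsplit ▸ norm_add_le _ _
    _ ≤ sv B k * ‖x‖ + sv (A - B) 1 * ‖x‖ :=
      add_le_add (hBW x hxW) (norm_toEuclideanLin_le_sv_one_mul _ x)
    _ = (sv B k + sv (A - B) 1) * ‖x‖ := by ring

lemma norm_toEuclideanLin_submatrix_le_sv_one_mul {p' q' : ℕ} (E : Matrix (Fin p) (Fin q) ℝ)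
    {r : Fin p' → Fin p} {c : Fin q' → Fin q} (hr : Function.Injective r)
    (hc : Function.Injective c) (x : EuclideanSpace ℝ (Fin q')) :
    ‖toEuclideanLin (E.submatrix r c) x‖ ≤ sv E 1 * ‖x‖ := by
  set x' : EuclideanSpace ℝ (Fin q) := toLp 2 (Function.extend c (ofLp x) 0)
  have hsub : toEuclideanLin (E.submatrix r c) x = toLp 2 (ofLp (toEuclideanLin E x') ∘ r) := by
    ext i
    simp [x', mulVec, dotProduct, Fintype.sum_apply_extend_zero hc _ (fun j a => E (r i) j * a)]
  calc _ ≤ ‖toEuclideanLin E x'‖ := hsub ▸ EuclideanSpace.norm_toLp_comp_le _ hr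
    _ ≤ sv E 1 * ‖x‖ :=
      EuclideanSpace.norm_toLp_extend_zero x hc ▸ norm_toEuclideanLin_le_sv_one_mul E x'

lemma sv_mul_sv_mul_norm_le_norm_toEuclideanLin_mul {r : ℕ} (A : Matrix (Fin p) (Fin q) ℝ)
    (B : Matrix (Fin q) (Fin r) ℝ) (x : EuclideanSpace ℝ (Fin r)) :
    sv A q * sv B r * ‖x‖ ≤ ‖toEuclideanLin (A * B) x‖ := by
  rw [toLpLin_mul (q := 2), LinearMap.comp_apply, mul_assoc]
  calc sv A q * (sv B r * ‖x‖) ≤ sv A q * ‖toEuclideanLin B x‖ :=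
        mul_le_mul_of_nonneg_left (sv_mul_norm_le_norm_toEuclideanLin B x) (sv_nonneg A q)
    _ ≤ _ := sv_mul_norm_le_norm_toEuclideanLin A _

end SingularValues

theorem stmt2_general (m n s : ℕ) (hs : 1 ≤ s)
    (M : Matrix (Fin (s + m)) (Fin (s + n)) ℝ)
    (G : Matrix (Fin (s + m)) (Fin s) ℝ) (S : Matrix (Fin s) (Fin (s + n)) ℝ)
    (es : ℝ) (hes : sv (M - G * S) 1 ≤ es)
    (GA : Matrix (Fin s) (Fin s) ℝ) (hGAdef : GA = G.submatrix (Fin.castAdd m) id)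
    (SA : Matrix (Fin s) (Fin s) ℝ) (hSAdef : SA = S.submatrix id (Fin.castAdd n))
    (AM : Matrix (Fin s) (Fin s) ℝ)
    (hAMdef : AM = M.submatrix (Fin.castAdd m) (Fin.castAdd n))
    (γ : ℝ) (hγ : 1 ≤ γ) (h2 : sv G s * sv S s = sv (G * S) s / γ)
    (β : ℝ) (hβ : 1 ≤ β) (h3G : sv G s / β ≤ sv GA s) (h3S : sv S s / β ≤ sv SA s)
    (h4 : es < (sv M s - es) / (β ^ 2 * γ)) :
    IsUnit AM.det := by
  have hweyl := sv_le_sv_add_sv_one_sub M (G * S) hs (by omega)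
  have hgap : es < sv GA s * sv SA s :=
    calc es < (sv M s - es) / (β ^ 2 * γ) := h4
      _ ≤ sv (G * S) s / (β ^ 2 * γ) := by gcongr; linarith
      _ = (sv G s / β) * (sv S s / β) := by
        rw [show sv (G * S) s / (β ^ 2 * γ) = sv (G * S) s / γ / β ^ 2 by ring, ← h2]
        ring
      _ ≤ sv GA s * sv SA s :=
        mul_le_mul h3G h3S (div_nonneg (sv_nonneg S s) (by linarith)) (sv_nonneg GA s)
  have hAM : AM = GA * SA + (M - G * S).submatrix (Fin.castAdd m) (Fin.castAdd n) := by
    ext i j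
    simp [hAMdef, hGAdef, hSAdef, mul_apply]
  rw [hAM]
  refine isUnit_det_add_of_norm_le (sv_mul_sv_mul_norm_le_norm_toEuclideanLin_mul GA SA)
    (fun x => ?_) hgap
  exact (norm_toEuclideanLin_submatrix_le_sv_one_mul _ (Fin.castAdd_injective s m)
    (Fin.castAdd_injective s n) x).trans (mul_le_mul_of_nonneg_right hes (norm_nonneg x))

/-- Theorem `a_is_invertible`: under assumptions (1)–(4) on the
approximate rank-`s` decomposition `M ≈ G * S`, the sample matrix `A_M`
(the top-left `s×s` block of `M`) is nonsingular. -/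
theorem stmt2 (m n s : ℕ) (hs : 1 ≤ s)
    (M : Matrix (Fin (s + m)) (Fin (s + n)) ℝ)
    (G : Matrix (Fin (s + m)) (Fin s) ℝ) (S : Matrix (Fin s) (Fin (s + n)) ℝ)
    (es : ℝ) (hes : sv (M - G * S) 1 ≤ es)
    (GA : Matrix (Fin s) (Fin s) ℝ) (hGAdef : GA = G.submatrix (Fin.castAdd m) id)
    (SA : Matrix (Fin s) (Fin s) ℝ) (hSAdef : SA = S.submatrix id (Fin.castAdd n))
    (AM : Matrix (Fin s) (Fin s) ℝ)
    (hAMdef : AM = M.submatrix (Fin.castAdd m) (Fin.castAdd n))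
    (h1 : 0 < sv (G * S) s)
    (γ : ℝ) (hγ : 1 ≤ γ) (h2 : sv G s * sv S s = sv (G * S) s / γ)
    (β : ℝ) (hβ : 1 ≤ β) (h3G : sv G s / β ≤ sv GA s) (h3S : sv S s / β ≤ sv SA s)
    (h4 : es < (sv M s - es) / (β ^ 2 * γ)) :
    IsUnit AM.det :=
  stmt2_general m n s hs M G S es hes GA hGAdef SA hSAdef AM hAMdef γ hγ h2 β hβ h3G h3S h4
end

section
/- Let M ∈ ℝ^{m×n} have rank at most s, be partitioned in blocks A_M, B_M, F_M, C_M with A_M ∈ ℝ^{s×s} its top-left block, and suppose A_M is nonsingular. Then C_M = F_M·A_M^{-1}·B_M; that is, the Nyström extension reconstructs M exactly: M = [A_M; F_M]·A_M^{-1}·[A_M, B_M]. -/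
open Matrix

/-!
If `A` is invertible and `D - C A⁻¹ B` had a nonzero entry `(i, j)`, then bordering `A` by
row `i` and column `j` would give a square submatrix of `fromBlocks A B C D` whose determinant,
by the Schur complement formula, is `det A · (D - C A⁻¹ B) i j ≠ 0`. That submatrix has rank
`card m + 1`, so the whole matrix cannot have rank `card m`.
-/

namespace Matrix

variable {K l m n : Type*} [Field K] [Fintype m] [DecidableEq m]

theorem det_fromBlocks_single_eq_det_mul_schur [Fintype n] (A : Matrix m m K) (B : Matrix m n K)
    (C : Matrix l m K) (D : Matrix l n K) (hA : IsUnit A.det) (i : l) (j : n) :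
    (fromBlocks A (B.submatrix id fun _ : Unit => j) (C.submatrix (fun _ : Unit => i) id)
        (D.submatrix (fun _ : Unit => i) fun _ : Unit => j)).det =
      A.det * (D - C * A⁻¹ * B) i j := by
  let _ : Invertible A := invertibleOfIsUnitDet A hA
  rw [det_fromBlocks₁₁, invOf_eq_nonsing_inv]
  simp [mul_apply]

theorem eq_mul_inv_mul_of_rank_fromBlocks_le [Fintype l] [Fintype n] (A : Matrix m m K)
    (B : Matrix m n K) (C : Matrix l m K) (D : Matrix l n K) (hA : IsUnit A.det)
    (hrank : (fromBlocks A B C D).rank ≤ Fintype.card m) :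
    D = C * A⁻¹ * B := by
  rw [← sub_eq_zero]
  ext i j
  by_contra hij
  set N := fromBlocks A (B.submatrix id fun _ : Unit => j) (C.submatrix (fun _ : Unit => i) id)
    (D.submatrix (fun _ : Unit => i) fun _ : Unit => j)
  have hN : N = (fromBlocks A B C D).submatrix (Sum.map id fun _ => i) (Sum.map id fun _ => j) := by
    ext (_ | _) (_ | _) <;> rfl
  have hNdet : IsUnit N.det := by
    rw [det_fromBlocks_single_eq_det_mul_schur A B C D hA i j]
    exact hA.mul (isUnit_iff_ne_zero.mpr hij)
  have hNrank : N.rank = Fintype.card m + 1 := by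
    rw [rank_of_isUnit N ((isUnit_iff_isUnit_det N).mpr hNdet), Fintype.card_sum,
      Fintype.card_unit]
  have hle : N.rank ≤ (fromBlocks A B C D).rank := hN ▸ rank_submatrix_le _ _ _
  omega

theorem fromBlocks_eq_fromRows_mul_inv_mul_fromCols (A : Matrix m m K)
    (B : Matrix m n K) (C : Matrix l m K) (D : Matrix l n K) (hA : IsUnit A.det)
    (hD : D = C * A⁻¹ * B) :
    fromBlocks A B C D = fromRows A C * A⁻¹ * fromCols A B := by
  rw [fromRows_mul, mul_fromCols, fromRows_mul, fromRows_mul, fromCols_fromRows_eq_fromBlocks,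
    mul_nonsing_inv _ hA, Matrix.one_mul, Matrix.one_mul, Matrix.mul_assoc, nonsing_inv_mul _ hA,
    Matrix.mul_one, hD]

end Matrix

/-- Corollary `rank_s_matrix_approx`: if `M` has rank at most `s`
and its top-left `s×s` block `A_M` is nonsingular, then
`C_M = F_M A_M⁻¹ B_M`, i.e. the Nyström extension
`[A_M; F_M] · A_M⁻¹ · [A_M, B_M]` reconstructs `M` exactly. -/
theorem stmt9 (m n s : ℕ)
    (M : Matrix (Fin (s + m)) (Fin (s + n)) ℝ)
    (hrank : M.rank ≤ s)
    (AM : Matrix (Fin s) (Fin s) ℝ)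
    (hAMdef : AM = M.submatrix (Fin.castAdd m) (Fin.castAdd n))
    (BM : Matrix (Fin s) (Fin n) ℝ)
    (hBMdef : BM = M.submatrix (Fin.castAdd m) (Fin.natAdd s))
    (FM : Matrix (Fin m) (Fin s) ℝ)
    (hFMdef : FM = M.submatrix (Fin.natAdd s) (Fin.castAdd n))
    (CM : Matrix (Fin m) (Fin n) ℝ)
    (hCMdef : CM = M.submatrix (Fin.natAdd s) (Fin.natAdd s))
    (hAM : IsUnit AM.det) :
    CM = FM * AM⁻¹ * BM ∧
      M.submatrix finSumFinEquiv finSumFinEquiv =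
        Matrix.fromRows AM FM * AM⁻¹ * Matrix.fromCols AM BM := by
  have hblocks : M.submatrix finSumFinEquiv finSumFinEquiv = fromBlocks AM BM FM CM := by
    subst hAMdef hBMdef hFMdef hCMdef
    exact (fromBlocks_toBlocks _).symm
  have hschur : CM = FM * AM⁻¹ * BM := by
    refine eq_mul_inv_mul_of_rank_fromBlocks_le AM BM FM CM hAM ?_
    rwa [← hblocks, rank_submatrix, Fintype.card_fin]
  exact ⟨hschur,
    hblocks.trans (fromBlocks_eq_fromRows_mul_inv_mul_fromCols AM BM FM CM hAM hschur)⟩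
end

section
/- Let M ∈ ℝ^{m×n} be partitioned in blocks A_M, B_M, F_M, C_M with A_M ∈ ℝ^{s×s} its top-left block, and suppose A_M = U·Λ·Hᵀ where U, H ∈ ℝ^{s×s} are orthogonal and Λ ∈ ℝ^{s×s} is diagonal and invertible. Define the extended singular vector matrices Û = [U; F_M·H·Λ^{-1}] ∈ ℝ^{m×s} and Ĥ = [H; B_Mᵀ·U·Λ^{-1}] ∈ ℝ^{n×s}. Then Û·Λ·Ĥᵀ = [[A_M, B_M], [F_M, F_M·A_M^{-1}·B_M]]; in particular the Nyström form leaves the blocks A_M, B_M, F_M unchanged and approximates C_M by F_M·A_M^{-1}·B_M. -/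
/-!
With `Û = [U; F H Λ⁻¹]` and `Ĥᵀ = [Hᵀ, Λ⁻¹ Uᵀ B]` (as `Λ` is symmetric), the four blocks of
`Û Λ Ĥᵀ` are `U Λ Hᵀ = A`, `U Uᵀ B = B`, `F H Hᵀ = F` and `F (H Λ⁻¹ Uᵀ) B`, and the last
bracket is `A⁻¹` because `Uᵀ` and `H` are the inverses of `U` and `Hᵀ`.
-/

open Matrix

namespace Matrix

variable {m n s α : Type*} [Fintype s] [DecidableEq s] [CommRing α]

theorem inv_mul_mul_transpose_of_mul_transpose_eq_one {U H : Matrix s s α}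
    (hU : U * Uᵀ = 1) (hH : H * Hᵀ = 1) (D : Matrix s s α) :
    (U * D * Hᵀ)⁻¹ = H * D⁻¹ * Uᵀ := by
  rw [mul_inv_rev, mul_inv_rev, inv_eq_right_inv hU, inv_eq_left_inv hH, Matrix.mul_assoc]

theorem fromRows_mul_mul_transpose_fromRows_eq_fromBlocks {U H D : Matrix s s α}
    (hU : U * Uᵀ = 1) (hH : H * Hᵀ = 1) (hD : IsUnit D.det) (hDt : Dᵀ = D)
    (F : Matrix m s α) (B : Matrix s n α) :
    fromRows U (F * H * D⁻¹) * D * (fromRows H (Bᵀ * U * D⁻¹))ᵀ =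
      fromBlocks (U * D * Hᵀ) B F (F * (U * D * Hᵀ)⁻¹ * B) := by
  have hBt : (Bᵀ * U * D⁻¹)ᵀ = D⁻¹ * (Uᵀ * B) := by
    rw [transpose_mul, transpose_mul, transpose_nonsing_inv, hDt, transpose_transpose]
  rw [transpose_fromRows, fromRows_mul, fromRows_mul_fromCols, hBt,
    nonsing_inv_mul_cancel_right D _ hD, inv_mul_mul_transpose_of_mul_transpose_eq_one hU hH]
  congr 1
  · rw [Matrix.mul_assoc U, mul_nonsing_inv_cancel_left D _ hD, ← Matrix.mul_assoc, hU,
      Matrix.one_mul]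
  · rw [Matrix.mul_assoc F, hH, Matrix.mul_one]
  · simp only [Matrix.mul_assoc]

end Matrix

theorem stmt15_general (m n s : ℕ)
    (AM : Matrix (Fin s) (Fin s) ℝ)
    (BM : Matrix (Fin s) (Fin n) ℝ)
    (FM : Matrix (Fin m) (Fin s) ℝ)
    (U H : Matrix (Fin s) (Fin s) ℝ)
    (hU' : U * Uᵀ = 1)
    (hH' : H * Hᵀ = 1)
    (l : Fin s → ℝ) (hl : ∀ i, l i ≠ 0)
    (hSVD : AM = U * Matrix.diagonal l * Hᵀ)
    (Uhat : Matrix (Fin s ⊕ Fin m) (Fin s) ℝ)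
    (hUhat : Uhat = Matrix.fromRows U (FM * H * (Matrix.diagonal l)⁻¹))
    (Hhat : Matrix (Fin s ⊕ Fin n) (Fin s) ℝ)
    (hHhat : Hhat = Matrix.fromRows H (BMᵀ * U * (Matrix.diagonal l)⁻¹)) :
    Uhat * Matrix.diagonal l * Hhatᵀ =
      Matrix.fromBlocks AM BM FM (FM * AM⁻¹ * BM) := by
  have hdet : IsUnit (diagonal l).det :=
    (isUnit_iff_isUnit_det _).mp (isUnit_diagonal.mpr (Pi.isUnit_iff.mpr fun i => (hl i).isUnit))
  rw [hUhat, hHhat, hSVD]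
  exact fromRows_mul_mul_transpose_fromRows_eq_fromBlocks hU' hH' hdet (diagonal_transpose l) FM BM

/-- Nyström-like SVD extension, Eq. (13): if
`A_M = U Λ Hᵀ` is an SVD of the sample block with `Λ` diagonal invertible, then
the extended singular vector matrices `Û = [U; F_M H Λ⁻¹]` and
`Ĥ = [H; B_Mᵀ U Λ⁻¹]` satisfy
`Û Λ Ĥᵀ = [[A_M, B_M], [F_M, F_M A_M⁻¹ B_M]]`. -/
theorem stmt15 (m n s : ℕ)
    (AM : Matrix (Fin s) (Fin s) ℝ)
    (BM : Matrix (Fin s) (Fin n) ℝ)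
    (FM : Matrix (Fin m) (Fin s) ℝ)
    (U H : Matrix (Fin s) (Fin s) ℝ)
    (hU : Uᵀ * U = 1) (hU' : U * Uᵀ = 1)
    (hH : Hᵀ * H = 1) (hH' : H * Hᵀ = 1)
    (l : Fin s → ℝ) (hl : ∀ i, l i ≠ 0)
    (hSVD : AM = U * Matrix.diagonal l * Hᵀ)
    (Uhat : Matrix (Fin s ⊕ Fin m) (Fin s) ℝ)
    (hUhat : Uhat = Matrix.fromRows U (FM * H * (Matrix.diagonal l)⁻¹))
    (Hhat : Matrix (Fin s ⊕ Fin n) (Fin s) ℝ)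
    (hHhat : Hhat = Matrix.fromRows H (BMᵀ * U * (Matrix.diagonal l)⁻¹)) :
    Uhat * Matrix.diagonal l * Hhatᵀ =
      Matrix.fromBlocks AM BM FM (FM * AM⁻¹ * BM) :=
  stmt15_general m n s AM BM FM U H hU' hH' l hl hSVD Uhat hUhat Hhat hHhat
end

section
/- Let M ∈ ℝ^{n×n} be partitioned in blocks A_M, B_M, F_M, C_M with A_M ∈ ℝ^{s×s} its top-left block, and suppose A_M = U·Λ·U^{-1} where U ∈ ℝ^{s×s} is invertible and Λ ∈ ℝ^{s×s} is diagonal and invertible. Define Û = [U; F_M·U·Λ^{-1}] ∈ ℝ^{n×s} and V̂ = [U^{-1}, Λ^{-1}·U^{-1}·B_M] ∈ ℝ^{s×n}. Then Û·Λ·V̂ = [[A_M, B_M], [F_M, F_M·A_M^{-1}·B_M]] = [A_M; F_M]·A_M^{-1}·[A_M, B_M]. -/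
open Matrix

namespace Matrix

variable {m p q R : Type*} [Fintype m] [DecidableEq m] [CommRing R]

theorem fromRows_mul_inv_mul_fromCols {A : Matrix m m R} (hA : IsUnit A.det)
    (F : Matrix p m R) (B : Matrix m q R) :
    fromRows A F * A⁻¹ * fromCols A B = fromBlocks A B F (F * A⁻¹ * B) := by
  rw [fromRows_mul, fromRows_mul_fromCols, mul_nonsing_inv _ hA, Matrix.one_mul, Matrix.one_mul,
    Matrix.mul_assoc F, nonsing_inv_mul _ hA, Matrix.mul_one]

theorem fromRows_mul_mul_fromCols_of_factorization {X D Z : Matrix m m R}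
    (hX : IsUnit X.det) (hD : IsUnit D.det) (hZ : IsUnit Z.det)
    (F : Matrix p m R) (B : Matrix m q R) :
    fromRows X (F * Z⁻¹ * D⁻¹) * D * fromCols Z (D⁻¹ * X⁻¹ * B) =
      fromBlocks (X * D * Z) B F (F * (X * D * Z)⁻¹ * B) := by
  rw [fromRows_mul, fromRows_mul_fromCols]
  simp only [mul_inv_rev, Matrix.mul_assoc, mul_nonsing_inv_cancel_left _ _ hD,
    mul_nonsing_inv_cancel_left _ _ hX, nonsing_inv_mul_cancel_left _ _ hD, nonsing_inv_mul _ hZ,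
    Matrix.mul_one]

end Matrix

/-- Nyström EVD extension, Eqs. (6)–(7): if
`A_M = U Λ U⁻¹` is an eigen-decomposition of the sample block with `U`
invertible and `Λ` diagonal invertible, then the extended eigenvector matrices
`Û = [U; F_M U Λ⁻¹]` and `V̂ = [U⁻¹, Λ⁻¹ U⁻¹ B_M]` satisfy
`Û Λ V̂ = [[A_M, B_M], [F_M, F_M A_M⁻¹ B_M]] = [A_M; F_M] A_M⁻¹ [A_M, B_M]`. -/
theorem stmt16 (n s : ℕ)
    (AM : Matrix (Fin s) (Fin s) ℝ)
    (BM : Matrix (Fin s) (Fin n) ℝ)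
    (FM : Matrix (Fin n) (Fin s) ℝ)
    (U : Matrix (Fin s) (Fin s) ℝ) (hU : IsUnit U.det)
    (l : Fin s → ℝ) (hl : ∀ i, l i ≠ 0)
    (hEVD : AM = U * Matrix.diagonal l * U⁻¹)
    (Uhat : Matrix (Fin s ⊕ Fin n) (Fin s) ℝ)
    (hUhat : Uhat = Matrix.fromRows U (FM * U * (Matrix.diagonal l)⁻¹))
    (Vhat : Matrix (Fin s) (Fin s ⊕ Fin n) ℝ)
    (hVhat : Vhat = Matrix.fromCols U⁻¹ ((Matrix.diagonal l)⁻¹ * U⁻¹ * BM)) :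
    Uhat * Matrix.diagonal l * Vhat =
        Matrix.fromBlocks AM BM FM (FM * AM⁻¹ * BM) ∧
      Uhat * Matrix.diagonal l * Vhat =
        Matrix.fromRows AM FM * AM⁻¹ * Matrix.fromCols AM BM := by
  have hΛ : IsUnit (diagonal l).det := by
    rw [← isUnit_iff_isUnit_det, isUnit_diagonal, Pi.isUnit_iff]
    exact fun i => (hl i).isUnit
  have hU' : IsUnit U⁻¹.det := isUnit_nonsing_inv_det U hU
  have hAM : IsUnit AM.det := by
    rw [hEVD, det_mul, det_mul]
    exact (hU.mul hΛ).mul hU'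
  have hblocks : Uhat * diagonal l * Vhat = fromBlocks AM BM FM (FM * AM⁻¹ * BM) := by
    have h := fromRows_mul_mul_fromCols_of_factorization hU hΛ hU' FM BM
    rwa [nonsing_inv_nonsing_inv U hU, ← hEVD, ← hUhat, ← hVhat] at h
  exact ⟨hblocks, hblocks.trans (fromRows_mul_inv_mul_fromCols hAM FM BM).symm⟩
end
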